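/- Let G' be the tripartite reachability graph of Boolean matrices A, B (vertex sets I, J, K identified with [n], with edge k → i iff A[i,k] = 1 and k → j iff B[k,j] = 1), augmented with a vertex w that has an edge to every vertex of I ∪ J and an edge to exactly those k ∈ K lying in a set T ⊆ K. Then for any i ∈ I and j ∈ J, the vertex w is an LCA of i and j in this DAG if and only if there is no k ∈ T with A[i,k] = 1 and B[k,j] = 1. -/
import Mathlib


variable {V : Type*}

/-- Reflexive-transitive reachability along directed edges. -/
def Reach (E : V → V → Prop) : V → V → Prop := Relation.ReflTransGen E

/-- Set of (reflexive) ancestors of `u`. -/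
def Anc (E : V → V → Prop) (u : V) : Set V := {x | Reach E x u}

/-- `w` is a lowest common ancestor of `u` and `v`. -/
def IsLCA (E : V → V → Prop) (u v w : V) : Prop :=
  Reach E w u ∧ Reach E w v ∧
    ∀ y, y ≠ w → Reach E w y → ¬(Reach E y u ∧ Reach E y v)

/-- The set of LCAs of `u` and `v`. -/
def LCAset (E : V → V → Prop) (u v : V) : Set V := {w | IsLCA E u v w}

/-- The directed graph given by `E` is acyclic (reachability is antisymmetric). -/
def IsDAG (E : V → V → Prop) : Prop :=
  ∀ u v : V, Reach E u v → Reach E v u → u = v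

section MaxWitness

/-- Vertices of the tripartite reachability DAG plus the extra vertex `w`:
`I ⊕ (J ⊕ (K ⊕ {w}))`, each of `I, J, K` a copy of `Fin n`. -/
abbrev MWVert (n : ℕ) := Fin n ⊕ (Fin n ⊕ (Fin n ⊕ Unit))

/-- Edges: `k → i` iff `A i k = true`, `k → j` iff `B k j = true`; `w` has an
edge to every vertex of `I ∪ J`, and to exactly those `k ∈ K` lying in `T`. -/
def MWEdge {n : ℕ} (A B : Matrix (Fin n) (Fin n) Bool) (T : Set (Fin n)) :
    MWVert n → MWVert n → Prop
  | .inr (.inr (.inl k)), .inl i => A i k = true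
  | .inr (.inr (.inl k)), .inr (.inl j) => B k j = true
  | .inr (.inr (.inr _)), .inl _ => True
  | .inr (.inr (.inr _)), .inr (.inl _) => True
  | .inr (.inr (.inr _)), .inr (.inr (.inl k)) => k ∈ T
  | _, _ => False

lemma sinkI {n : ℕ} {A B : Matrix (Fin n) (Fin n) Bool} {T : Set (Fin n)}
    {i : Fin n} {x : MWVert n} (h : Reach (MWEdge A B T) (.inl i) x) :
    x = .inl i := by
  induction h with
  | refl => rfl
  | tail _ e ih => subst ih; simp [MWEdge] at e

lemma sinkJ {n : ℕ} {A B : Matrix (Fin n) (Fin n) Bool} {T : Set (Fin n)}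
    {j : Fin n} {x : MWVert n} (h : Reach (MWEdge A B T) (.inr (.inl j)) x) :
    x = .inr (.inl j) := by
  induction h with
  | refl => rfl
  | tail _ e ih => subst ih; simp [MWEdge] at e

lemma fromK {n : ℕ} {A B : Matrix (Fin n) (Fin n) Bool} {T : Set (Fin n)}
    {k : Fin n} {x : MWVert n} (h : Reach (MWEdge A B T) (.inr (.inr (.inl k))) x) :
    x = .inr (.inr (.inl k)) ∨ (∃ i, x = .inl i ∧ A i k = true) ∨
      (∃ j, x = .inr (.inl j) ∧ B k j = true) := by
  induction h with
  | refl => left; rfl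
  | tail _ e ih =>
    rcases ih with h | ⟨i, rfl, _⟩ | ⟨j, rfl, _⟩
    · subst h
      rename_i c _
      match c, e with
      | .inl i, e => exact Or.inr (Or.inl ⟨i, rfl, e⟩)
      | .inr (.inl j), e => exact Or.inr (Or.inr ⟨j, rfl, e⟩)
    · simp [MWEdge] at e
    · simp [MWEdge] at e

lemma fromW {n : ℕ} {A B : Matrix (Fin n) (Fin n) Bool} {T : Set (Fin n)}
    {x : MWVert n} (h : Reach (MWEdge A B T) (.inr (.inr (.inr ()))) x) :
    x = .inr (.inr (.inr ())) ∨ (∃ i : Fin n, x = .inl i) ∨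
      (∃ j : Fin n, x = .inr (.inl j)) ∨
      (∃ k, x = .inr (.inr (.inl k)) ∧ k ∈ T) ∨
      (∃ k i, x = .inl i ∧ A i k = true) ∨
      (∃ k j, x = .inr (.inl j) ∧ B k j = true) := by
  induction h with
  | refl => left; rfl
  | tail _ e ih =>
    rcases ih with h | ⟨i, rfl⟩ | ⟨j, rfl⟩ | ⟨k, rfl, hk⟩ | ⟨k, i, rfl, _⟩ | ⟨k, j, rfl, _⟩
    · subst h
      rename_i c _
      match c, e with
      | .inl i, e => exact Or.inr (Or.inl ⟨i, rfl⟩)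
      | .inr (.inl j), e => exact Or.inr (Or.inr (Or.inl ⟨j, rfl⟩))
      | .inr (.inr (.inl k)), e =>
        exact Or.inr (Or.inr (Or.inr (Or.inl ⟨k, rfl, e⟩)))
    · simp [MWEdge] at e
    · simp [MWEdge] at e
    · rename_i c _
      match c, e with
      | .inl i, e => exact Or.inr (Or.inr (Or.inr (Or.inr (Or.inl ⟨k, i, rfl, e⟩))))
      | .inr (.inl j), e =>
        exact Or.inr (Or.inr (Or.inr (Or.inr (Or.inr ⟨k, j, rfl, e⟩))))
    · simp [MWEdge] at e
    · simp [MWEdge] at e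

theorem stmt_19 {n : ℕ} (A B : Matrix (Fin n) (Fin n) Bool) (T : Set (Fin n)) :
    ∀ i j : Fin n,
      IsLCA (MWEdge A B T) (.inl i) (.inr (.inl j)) (.inr (.inr (.inr ()))) ↔
        ¬ ∃ k ∈ T, A i k = true ∧ B k j = true := by
  intro i j
  constructor
  · rintro ⟨_, _, hmin⟩ ⟨k, hkT, hA, hB⟩
    exact hmin (.inr (.inr (.inl k))) (by simp)
      (Relation.ReflTransGen.single (by simpa [MWEdge] using hkT))
      ⟨Relation.ReflTransGen.single (by simpa [MWEdge] using hA),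
       Relation.ReflTransGen.single (by simpa [MWEdge] using hB)⟩
  · intro hno
    refine ⟨Relation.ReflTransGen.single (by simp [MWEdge]),
      Relation.ReflTransGen.single (by simp [MWEdge]), ?_⟩
    rintro y hy hwy ⟨hyi, hyj⟩
    match y with
    | .inr (.inr (.inr ())) => exact hy rfl
    | .inl i' => exact absurd (sinkI hyj) (by simp)
    | .inr (.inl j') => exact absurd (sinkJ hyi) (by simp)
    | .inr (.inr (.inl k)) =>
      have hkT : k ∈ T := by
        rcases fromW hwy with h | ⟨_, h⟩ | ⟨_, h⟩ | ⟨k', h, hk'⟩ | ⟨_, _, h, _⟩ | ⟨_, _, h, _⟩ <;>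
          simp_all
      have hA : A i k = true := by
        rcases fromK hyi with h | ⟨i', h, hA⟩ | ⟨_, h, _⟩ <;> simp_all
      have hB : B k j = true := by
        rcases fromK hyj with h | ⟨_, h, _⟩ | ⟨j', h, hB⟩ <;> simp_all
      exact hno ⟨k, hkT, hA, hB⟩

end MaxWitness
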